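/- arXiv:2510.08262 — 5 statements merged into one kernel-verified Lean document; each statement's English description precedes it below -/
import Mathlib

section
/- Let N be a positive integer, M a nonnegative integer, and n a nonnegative integer. Then the number of pairs of partitions (α, β) with |α| + |β| = n such that α has at most N parts each at most M and every part of β lies in the interval [M+1, M+N], equals the number of partitions of n with at most N parts. -/
/-- A partition: a finite nonincreasing list of positive integers. -/
structure Partn where
  parts : List ℕ
  sorted : parts.Pairwise (· ≥ ·)
  pos : ∀ x ∈ parts, 0 < x

namespace Partn

/-- The weight `|λ|` of a partition: the sum of its parts. -/
def wt (p : Partn) : ℕ := p.parts.sum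

/-- The length `ℓ(λ)`: the number of parts. -/
def len (p : Partn) : ℕ := p.parts.length

/-- The `j`-th largest part `λ_j` (1-indexed), with `λ_j = 0` for `j > ℓ(λ)`. -/
def part (p : Partn) (j : ℕ) : ℕ := p.parts.getD (j - 1) 0

/-- `f_j(λ)`: the number of parts of `λ` equal to `j`. -/
def freq (p : Partn) (j : ℕ) : ℕ := p.parts.count j

/-- The empty partition. -/
def empty : Partn := ⟨[], List.Pairwise.nil, by simp⟩

end Partn

/-!
Encode partitions as multisets of positive integers and let `B(A, lo, hi)` be the set of pairs
`(α, β)` of total weight `n` such that `α` has at most `N` parts, all in `[1, A]`, and the parts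
of `β` lie in `[lo, hi]`. The theorem counts `B(M, M+1, M+N)`, and this count does not change
under `M ↦ M + 1`. Inside `X = B(M+1, M+1, M+N+1)`, the set `B(M, M+1, M+N)` is the complement
of `E = {M+1 ∈ α or M+N+1 ∈ β}` and `B(M+1, M+2, M+N+1)` is the complement of
`D = {M+1 ∈ β}`. The map `absorb` is a weight-preserving bijection from `X ∩ D` to `X ∩ E`: it
moves a part `M+1` from `β` to `α` when `α` has fewer than `N` parts, and otherwise it subtracts
`1` from each of the `N` parts of `α` and replaces the part `M+1` of `β` by `M+N+1`. Since `X` is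
finite, the two complements have the same size. Once `M ≥ n`, `β` is forced to be empty and the
bound on the parts of `α` holds automatically.
-/

open Multiset

namespace Partn

def toMultiset (p : Partn) : Multiset ℕ := p.parts

@[simp] theorem mem_toMultiset {p : Partn} {x : ℕ} : x ∈ p.toMultiset ↔ x ∈ p.parts := mem_coe

@[simp] theorem sum_toMultiset (p : Partn) : p.toMultiset.sum = p.wt := sum_coe _

@[simp] theorem card_toMultiset (p : Partn) : card p.toMultiset = p.len := coe_card _

theorem toMultiset_injective : Function.Injective toMultiset := by
  rintro ⟨l, hl, _⟩ ⟨l', hl', _⟩ h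
  have := (coe_eq_coe.mp h).eq_of_pairwise (fun _ _ _ _ h h' => le_antisymm h' h) hl hl'
  simpa using this

theorem range_toMultiset : Set.range toMultiset = {m | ∀ x ∈ m, 0 < x} := by
  ext m
  refine ⟨?_, fun hm => ?_⟩
  · rintro ⟨p, rfl⟩ x hx
    exact p.pos x (mem_toMultiset.mp hx)
  · exact ⟨⟨m.sort (· ≥ ·), pairwise_sort _ _, fun x hx => hm x ((mem_sort _).mp hx)⟩,
      sort_eq _ _⟩

theorem ncard_preimage_toMultiset {s : Set (Multiset ℕ)} (hs : ∀ m ∈ s, ∀ x ∈ m, 0 < x) :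
    (toMultiset ⁻¹' s).ncard = s.ncard :=
  Set.ncard_preimage_of_injective_subset_range toMultiset_injective (range_toMultiset ▸ hs)

theorem ncard_preimage_prodMap_toMultiset {s : Set (Multiset ℕ × Multiset ℕ)}
    (hs : ∀ x ∈ s, (∀ y ∈ x.1, 0 < y) ∧ ∀ y ∈ x.2, 0 < y) :
    (Prod.map toMultiset toMultiset ⁻¹' s).ncard = s.ncard := by
  refine Set.ncard_preimage_of_injective_subset_range
    (toMultiset_injective.prodMap toMultiset_injective) ?_
  rw [Set.range_prodMap, range_toMultiset]
  exact hs

end Partn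

namespace GaussianRefinement

def addColumn (N : ℕ) (a : Multiset ℕ) : Multiset ℕ :=
  a.map (· + 1) + replicate (N - card a) 1

def removeColumn (a : Multiset ℕ) : Multiset ℕ :=
  (a.filter (1 < ·)).map (· - 1)

section Column

variable {N : ℕ} {a : Multiset ℕ}

theorem card_addColumn (h : card a ≤ N) : card (addColumn N a) = N := by
  simp only [addColumn, card_add, card_map, card_replicate]
  omega

theorem sum_addColumn (h : card a ≤ N) : (addColumn N a).sum = a.sum + N := by
  simp only [addColumn, sum_add, sum_map_add, map_id', map_const', sum_replicate, smul_eq_mul,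
    mul_one]
  omega

theorem removeColumn_addColumn (ha : ∀ y ∈ a, 0 < y) : removeColumn (addColumn N a) = a := by
  have hmap : (a.map (· + 1)).filter (1 < ·) = a.map (· + 1) :=
    filter_eq_self.mpr fun y hy => by
      obtain ⟨z, hz, rfl⟩ := mem_map.mp hy
      have := ha z hz
      omega
  have hrep : (replicate (N - card a) 1).filter (1 < ·) = 0 :=
    filter_eq_nil.mpr fun y hy => by simp [eq_of_mem_replicate hy]
  simp [removeColumn, addColumn, filter_add, hmap, hrep, map_map]

theorem addColumn_removeColumn (ha : ∀ y ∈ a, 0 < y) (hN : card a = N) :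
    addColumn N (removeColumn a) = a := by
  have hbig : (a.filter (1 < ·)).map (· - 1 + 1) = a.filter (1 < ·) := by
    conv_rhs => rw [← map_id (a.filter (1 < ·))]
    exact map_congr rfl fun y hy => Nat.sub_add_cancel (mem_filter.mp hy).2.le
  have hones : replicate (card (a.filter (¬ 1 < ·))) 1 = a.filter (¬ 1 < ·) :=
    (eq_replicate_card.mpr fun y hy => by
      have := mem_filter.mp hy
      have := ha y this.1
      omega).symm
  have hcard := congrArg card (filter_add_not (1 < ·) a)
  rw [card_add] at hcard
  rw [addColumn, removeColumn, card_map, map_map, Function.comp_def, hbig,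
    show N - card (a.filter (1 < ·)) = card (a.filter (¬ 1 < ·)) by omega, hones,
    filter_add_not]

theorem mem_removeColumn {y : ℕ} : y ∈ removeColumn a ↔ 0 < y ∧ y + 1 ∈ a := by
  simp only [removeColumn, mem_map, mem_filter]
  constructor
  · rintro ⟨z, ⟨hz, hz1⟩, rfl⟩
    exact ⟨by omega, by rwa [Nat.sub_add_cancel hz1.le]⟩
  · rintro ⟨hy, hya⟩
    exact ⟨y + 1, ⟨hya, by omega⟩, rfl⟩

theorem card_removeColumn_le (a : Multiset ℕ) : card (removeColumn a) ≤ card a :=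
  (card_map _ _).trans_le (card_le_card (filter_le _ _))

theorem sum_removeColumn (ha : ∀ y ∈ a, 0 < y) : (removeColumn a).sum + card a = a.sum := by
  conv_rhs => rw [← addColumn_removeColumn ha rfl]
  rw [sum_addColumn (card_removeColumn_le a)]

end Column

def boxPairs (A N lo hi n : ℕ) : Set (Multiset ℕ × Multiset ℕ) :=
  {x | (∀ y ∈ x.1, 0 < y ∧ y ≤ A) ∧ card x.1 ≤ N ∧ (∀ y ∈ x.2, lo ≤ y ∧ y ≤ hi) ∧
    x.1.sum + x.2.sum = n}

theorem finite_setOf_sum_le (n : ℕ) :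
    {m : Multiset ℕ | (∀ y ∈ m, 0 < y) ∧ m.sum ≤ n}.Finite := by
  refine ((Finset.range (n + 1)).finite_toSet.biUnion
    fun k _ => Set.finite_range (Nat.Partition.parts (n := k))).subset ?_
  rintro m ⟨hpos, hsum⟩
  simp only [Set.mem_iUnion, Set.mem_range, Finset.coe_range, Set.mem_Iio]
  exact ⟨m.sum, by omega, ⟨m, hpos _, rfl⟩, rfl⟩

theorem boxPairs_finite (A N lo hi n : ℕ) (hlo : 0 < lo) : (boxPairs A N lo hi n).Finite := by
  refine ((finite_setOf_sum_le n).prod (finite_setOf_sum_le n)).subset ?_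
  rintro x ⟨h1, -, h2, hsum⟩
  exact ⟨⟨fun y hy => (h1 y hy).1, by omega⟩, ⟨fun y hy => by have := (h2 y hy).1; omega, by omega⟩⟩

theorem boxPairs_eq_image (A N lo hi n : ℕ) (hA : n ≤ A) (hlo : n < lo) :
    boxPairs A N lo hi n = (·, 0) '' {a | (∀ y ∈ a, 0 < y) ∧ card a ≤ N ∧ a.sum = n} := by
  ext ⟨a, b⟩
  constructor
  · rintro ⟨ha, hcard, hb, hsum : a.sum + b.sum = n⟩
    obtain rfl : b = 0 := eq_zero_of_forall_notMem fun y hy => by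
      have := le_sum_of_mem hy
      have := (hb y hy).1
      omega
    exact ⟨a, ⟨fun y hy => (ha y hy).1, hcard, by simpa using hsum⟩, rfl⟩
  · rintro ⟨a, ⟨ha, hcard, rfl⟩, h⟩
    obtain ⟨rfl, rfl⟩ := Prod.mk.inj h
    exact ⟨fun y hy => ⟨ha y hy, (le_sum_of_mem hy).trans hA⟩, hcard, by simp, by simp⟩

theorem boxPairs_sdiff_bottom (A N lo hi n : ℕ) :
    boxPairs A N lo hi n \ {x | lo ∈ x.2} = boxPairs A N (lo + 1) hi n := by
  ext ⟨a, b⟩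
  simp only [boxPairs, Set.mem_sdiff, Set.mem_ofPred_eq]
  constructor
  · rintro ⟨⟨ha, hcard, hb, hsum⟩, hlo⟩
    refine ⟨ha, hcard, fun y hy => ?_, hsum⟩
    have := hb y hy
    have : y ≠ lo := fun h => hlo (h ▸ hy)
    omega
  · rintro ⟨ha, hcard, hb, hsum⟩
    exact ⟨⟨ha, hcard, fun y hy => by have := hb y hy; omega, hsum⟩,
      fun h => by have := hb _ h; omega⟩

theorem boxPairs_sdiff_top (A N lo hi n : ℕ) :
    boxPairs (A + 1) N lo (hi + 1) n \ {x | A + 1 ∈ x.1 ∨ hi + 1 ∈ x.2} =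
      boxPairs A N lo hi n := by
  ext ⟨a, b⟩
  simp only [boxPairs, Set.mem_sdiff, Set.mem_ofPred_eq, not_or]
  constructor
  · rintro ⟨⟨ha, hcard, hb, hsum⟩, hA, hhi⟩
    refine ⟨fun y hy => ?_, hcard, fun y hy => ?_, hsum⟩
    · have := ha y hy
      have : y ≠ A + 1 := fun h => hA (h ▸ hy)
      omega
    · have := hb y hy
      have : y ≠ hi + 1 := fun h => hhi (h ▸ hy)
      omega
  · rintro ⟨ha, hcard, hb, hsum⟩
    exact ⟨⟨fun y hy => by have := ha y hy; omega, hcard, fun y hy => by have := hb y hy; omega,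
      hsum⟩, fun h => by have := ha _ h; omega, fun h => by have := hb _ h; omega⟩

section Step

variable (M N : ℕ)

def absorb (x : Multiset ℕ × Multiset ℕ) : Multiset ℕ × Multiset ℕ :=
  if card x.1 < N then ((M + 1) ::ₘ x.1, x.2.erase (M + 1))
  else (removeColumn x.1, (M + N + 1) ::ₘ x.2.erase (M + 1))

def release (x : Multiset ℕ × Multiset ℕ) : Multiset ℕ × Multiset ℕ :=
  if M + 1 ∈ x.1 then (x.1.erase (M + 1), (M + 1) ::ₘ x.2)
  else (addColumn N x.1, (M + 1) ::ₘ x.2.erase (M + N + 1))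

variable {M N} {n : ℕ}

theorem absorb_mapsTo :
    Set.MapsTo (absorb M N) (boxPairs (M + 1) N (M + 1) (M + N + 1) n ∩ {x | M + 1 ∈ x.2})
      (boxPairs (M + 1) N (M + 1) (M + N + 1) n ∩ {x | M + 1 ∈ x.1 ∨ M + N + 1 ∈ x.2}) := by
  rintro ⟨a, b⟩ ⟨⟨ha, hcard, hb, hsum : a.sum + b.sum = n⟩, hM : M + 1 ∈ b⟩
  have hb' : b.sum = M + 1 + (b.erase (M + 1)).sum := by rw [← sum_cons, cons_erase hM]
  have hb_erase : ∀ y ∈ b.erase (M + 1), M + 1 ≤ y ∧ y ≤ M + N + 1 :=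
    fun y hy => hb y (mem_of_mem_erase hy)
  dsimp only at ha hcard hb
  simp only [absorb]
  split_ifs with hlt
  · refine ⟨⟨?_, ?_, hb_erase, ?_⟩, Or.inl (mem_cons_self _ _)⟩
    · simpa using ha
    · simpa using hlt
    · simp only [sum_cons]
      omega
  · have hsum_a := sum_removeColumn fun y hy => (ha y hy).1
    refine ⟨⟨fun y hy => ?_, (card_removeColumn_le a).trans hcard, ?_, ?_⟩,
      Or.inr (mem_cons_self _ _)⟩
    · obtain ⟨hy, hya⟩ := mem_removeColumn.mp hy
      have := (ha _ hya).2
      omega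
    · exact forall_mem_cons.mpr ⟨⟨by omega, le_rfl⟩, hb_erase⟩
    · simp only [sum_cons]
      omega

theorem release_mapsTo :
    Set.MapsTo (release M N)
      (boxPairs (M + 1) N (M + 1) (M + N + 1) n ∩ {x | M + 1 ∈ x.1 ∨ M + N + 1 ∈ x.2})
      (boxPairs (M + 1) N (M + 1) (M + N + 1) n ∩ {x | M + 1 ∈ x.2}) := by
  rintro ⟨a, b⟩ ⟨⟨ha, hcard, hb, hsum⟩, hE⟩
  dsimp only at ha hcard hb hsum hE
  simp only [release]
  have hb_cons : ∀ y ∈ (M + 1) ::ₘ b, M + 1 ≤ y ∧ y ≤ M + N + 1 :=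
    forall_mem_cons.mpr ⟨⟨le_rfl, by omega⟩, hb⟩
  split_ifs with hM
  · have ha' : a.sum = M + 1 + (a.erase (M + 1)).sum := by rw [← sum_cons, cons_erase hM]
    refine ⟨⟨fun y hy => ha y (mem_of_mem_erase hy), (card_erase_le).trans hcard, hb_cons, ?_⟩,
      mem_cons_self _ _⟩
    simp only [sum_cons]
    omega
  · have hN : M + N + 1 ∈ b := hE.resolve_left hM
    have hb' : b.sum = M + N + 1 + (b.erase (M + N + 1)).sum := by
      rw [← sum_cons, cons_erase hN]
    refine ⟨⟨fun y hy => ?_, (card_addColumn hcard).le, ?_, ?_⟩, mem_cons_self _ _⟩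
    · simp only [addColumn, mem_add, mem_map, mem_replicate] at hy
      rcases hy with ⟨z, hz, rfl⟩ | ⟨-, rfl⟩
      · have := (ha z hz).2
        have : z ≠ M + 1 := fun h => hM (h ▸ hz)
        omega
      · omega
    · exact forall_mem_cons.mpr ⟨⟨le_rfl, by omega⟩, fun y hy => hb y (mem_of_mem_erase hy)⟩
    · simp only [sum_cons, sum_addColumn hcard]
      omega

theorem release_absorb :
    Set.LeftInvOn (release M N) (absorb M N)
      (boxPairs (M + 1) N (M + 1) (M + N + 1) n ∩ {x | M + 1 ∈ x.2}) := by
  rintro ⟨a, b⟩ ⟨⟨ha, hcard, -, -⟩, hM : M + 1 ∈ b⟩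
  dsimp only at ha hcard
  simp only [absorb]
  split_ifs with hlt
  · simp [release, cons_erase hM]
  · have hM' : M + 1 ∉ removeColumn a := fun h => by
      have := (ha _ (mem_removeColumn.mp h).2).2
      omega
    simp only [release, if_neg hM', erase_cons_head, cons_erase hM,
      addColumn_removeColumn (fun y hy => (ha y hy).1) (by omega : card a = N)]

theorem absorb_release :
    Set.LeftInvOn (absorb M N) (release M N)
      (boxPairs (M + 1) N (M + 1) (M + N + 1) n ∩ {x | M + 1 ∈ x.1 ∨ M + N + 1 ∈ x.2}) := by
  rintro ⟨a, b⟩ ⟨⟨ha, hcard, -, -⟩, hE⟩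
  dsimp only at ha hcard hE
  simp only [release]
  split_ifs with hM
  · have hlt : card (a.erase (M + 1)) < N := (card_erase_lt_of_mem hM).trans_le hcard
    simp [absorb, hlt, cons_erase hM]
  · have hN : M + N + 1 ∈ b := hE.resolve_left hM
    simp [absorb, card_addColumn hcard, cons_erase hN,
      removeColumn_addColumn fun y hy => (ha y hy).1]

end Step

theorem ncard_boxPairs_succ (M N n : ℕ) :
    (boxPairs M N (M + 1) (M + N) n).ncard =
      (boxPairs (M + 1) N (M + 1 + 1) (M + N + 1) n).ncard := by
  set X := boxPairs (M + 1) N (M + 1) (M + N + 1) n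
  have hbij : Set.BijOn (absorb M N) (X ∩ {x | M + 1 ∈ x.2})
      (X ∩ {x | M + 1 ∈ x.1 ∨ M + N + 1 ∈ x.2}) :=
    Set.InvOn.bijOn ⟨release_absorb, absorb_release⟩ absorb_mapsTo release_mapsTo
  have hX : X.Finite := boxPairs_finite _ _ _ _ _ (Nat.succ_pos M)
  have hD := Set.ncard_inter_add_ncard_sdiff_eq_ncard X {x | M + 1 ∈ x.2} hX
  have hE := Set.ncard_inter_add_ncard_sdiff_eq_ncard X {x | M + 1 ∈ x.1 ∨ M + N + 1 ∈ x.2} hX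
  rw [boxPairs_sdiff_bottom] at hD
  rw [boxPairs_sdiff_top, hbij.ncard_eq.symm] at hE
  omega

theorem ncard_boxPairs_add (M N n k : ℕ) :
    (boxPairs M N (M + 1) (M + N) n).ncard =
      (boxPairs (M + k) N (M + k + 1) (M + k + N) n).ncard := by
  induction k with
  | zero => rfl
  | succ k ih =>
    rw [ih, ncard_boxPairs_succ, show M + k + N + 1 = M + (k + 1) + N by omega]
    rfl

theorem ncard_boxPairs_eq (M N n : ℕ) :
    (boxPairs M N (M + 1) (M + N) n).ncard =
      {a : Multiset ℕ | (∀ y ∈ a, 0 < y) ∧ card a ≤ N ∧ a.sum = n}.ncard := by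
  rw [ncard_boxPairs_add M N n n, boxPairs_eq_image _ _ _ _ _ (by omega) (by omega),
    Set.ncard_image_of_injective _ (Prod.mk_left_injective 0)]

end GaussianRefinement

open GaussianRefinement in
theorem gaussian_refinement_general (M N n : ℕ) :
    {p : Partn × Partn | p.1.wt + p.2.wt = n ∧ p.1.len ≤ N ∧
        (∀ x ∈ p.1.parts, x ≤ M) ∧
        (∀ x ∈ p.2.parts, M + 1 ≤ x ∧ x ≤ M + N)}.ncard =
      {g : Partn | g.wt = n ∧ g.len ≤ N}.ncard := by
  have hpairs : {p : Partn × Partn | p.1.wt + p.2.wt = n ∧ p.1.len ≤ N ∧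
        (∀ x ∈ p.1.parts, x ≤ M) ∧ (∀ x ∈ p.2.parts, M + 1 ≤ x ∧ x ≤ M + N)} =
      Prod.map Partn.toMultiset Partn.toMultiset ⁻¹' boxPairs M N (M + 1) (M + N) n := by
    ext ⟨p, q⟩
    simp only [Set.mem_ofPred_eq, Set.mem_preimage, Prod.map, boxPairs, Partn.mem_toMultiset,
      Partn.sum_toMultiset, Partn.card_toMultiset]
    exact ⟨fun ⟨hsum, hlen, hp, hq⟩ => ⟨fun x hx => ⟨p.pos x hx, hp x hx⟩, hlen, hq, hsum⟩,
      fun ⟨hp, hlen, hq, hsum⟩ => ⟨hsum, hlen, fun x hx => (hp x hx).2, hq⟩⟩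
  have hsingle : {g : Partn | g.wt = n ∧ g.len ≤ N} =
      Partn.toMultiset ⁻¹' {a | (∀ y ∈ a, 0 < y) ∧ card a ≤ N ∧ a.sum = n} := by
    ext g
    simp only [Set.mem_ofPred_eq, Set.mem_preimage, Partn.mem_toMultiset, Partn.sum_toMultiset,
      Partn.card_toMultiset]
    exact ⟨fun ⟨hsum, hlen⟩ => ⟨g.pos, hlen, hsum⟩, fun ⟨_, hlen, hsum⟩ => ⟨hsum, hlen⟩⟩
  rw [hpairs, hsingle, Partn.ncard_preimage_toMultiset (fun a ha => ha.1),
    Partn.ncard_preimage_prodMap_toMultiset, ncard_boxPairs_eq]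
  exact fun x hx => ⟨fun y hy => (hx.1 y hy).1, fun y hy => by have := (hx.2.2.1 y hy).1; omega⟩

/-- Theorem 1.2 (restated): the number of pairs `(α, β)` with `|α| + |β| = n`,
`α` having at most `N` parts each at most `M`, and every part of `β` lying in
`[M+1, M+N]`, equals the number of partitions of `n` with at most `N` parts. -/
theorem gaussian_refinement (M N n : ℕ) (hN : 0 < N) :
    {p : Partn × Partn | p.1.wt + p.2.wt = n ∧ p.1.len ≤ N ∧
        (∀ x ∈ p.1.parts, x ≤ M) ∧
        (∀ x ∈ p.2.parts, M + 1 ≤ x ∧ x ≤ M + N)}.ncard =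
      {g : Partn | g.wt = n ∧ g.len ≤ N}.ncard :=
  gaussian_refinement_general M N n
end

section
/- Let M ≥ 0 and N ≥ 1 be integers. There exists a bijection F from the set of pairs of partitions (α, γ) in which every part of α is at most M+N and γ has at most N parts each at most M, onto the set of pairs of partitions (ξ, δ) in which ξ has at most N parts and every part of δ is at most M, such that whenever F(α, γ) = (ξ, δ): (i) |α| + |γ| = |ξ| + |δ|, and (ii) the multiset of parts of α that are at most M coincides with the multiset of parts of δ. -/
section WeightFibers

variable {X Y Z : Type*}

theorem exists_weight_equiv_of_fiberwise (wX : X → ℕ) (wY : Y → ℕ)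
    (h : ∀ n, Nonempty ({x // wX x = n} ≃ {y // wY y = n})) :
    ∃ e : X ≃ Y, ∀ x, wY (e x) = wX x := by
  let f n := (h n).some
  exact ⟨(Equiv.sigmaFiberEquiv wX).symm.trans
    ((Equiv.sigmaCongrRight f).trans (Equiv.sigmaFiberEquiv wY)), fun x => (f _ _).2⟩

def fiberSumEquiv (wX : X → ℕ) (wY : Y → ℕ) (wZ : Z → ℕ) (k : ℕ) (e : X ≃ Y ⊕ Z)
    (he : ∀ s, wX (e.symm s) = Sum.elim wY (fun z => wZ z + k) s) (n : ℕ) :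
    {x // wX x = n} ≃ {y // wY y = n} ⊕ {z // wZ z + k = n} :=
  (e.subtypeEquiv (q := fun s => Sum.elim wY (fun z => wZ z + k) s = n) fun x => by
    rw [← he, e.symm_apply_apply]).trans Equiv.subtypeSum

theorem nonempty_shifted_fiber_equiv (wX : X → ℕ) (wY : Y → ℕ) (k n : ℕ)
    (h : ∀ m, m + k = n → Nonempty ({x // wX x = m} ≃ {y // wY y = m})) :
    Nonempty ({x // wX x + k = n} ≃ {y // wY y + k = n}) := by
  by_cases hkn : k ≤ n
  · obtain ⟨e⟩ := h (n - k) (by omega)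
    exact ⟨(Equiv.subtypeEquivRight fun x => by omega).trans
      (e.trans (Equiv.subtypeEquivRight fun y => by omega))⟩
  · have : IsEmpty {x // wX x + k = n} := ⟨fun x => by omega⟩
    have : IsEmpty {y // wY y + k = n} := ⟨fun y => by omega⟩
    exact ⟨Equiv.equivOfIsEmpty _ _⟩

theorem exists_weight_equiv_of_split {X Y : ℕ → Type*} (wX : ∀ N, X N → ℕ)
    (wY : ∀ N, Y N → ℕ) (k : ℕ → ℕ) (hk : ∀ N, 0 < k N)
    (e₀ : X 0 ≃ Y 0) (he₀ : ∀ x, wY 0 (e₀ x) = wX 0 x)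
    (sX : ∀ N, X (N + 1) ≃ X N ⊕ X (N + 1))
    (hsX : ∀ N s, wX (N + 1) ((sX N).symm s) = Sum.elim (wX N) (fun x => wX (N + 1) x + k N) s)
    (sY : ∀ N, Y (N + 1) ≃ Y N ⊕ Y (N + 1))
    (hsY : ∀ N s, wY (N + 1) ((sY N).symm s) = Sum.elim (wY N) (fun y => wY (N + 1) y + k N) s)
    (N : ℕ) : ∃ e : X N ≃ Y N, ∀ x, wY N (e x) = wX N x := by
  apply exists_weight_equiv_of_fiberwise
  induction N with
  | zero => exact fun n => ⟨e₀.subtypeEquiv fun x => by rw [he₀]⟩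
  | succ N ih =>
    intro n
    induction n using Nat.strong_induction_on with
    | _ n ihn =>
      obtain ⟨eN⟩ := ih n
      obtain ⟨eShifted⟩ := nonempty_shifted_fiber_equiv (wX (N + 1)) (wY (N + 1)) (k N) n
        fun m hm => ihn m (by have := hk N; omega)
      exact ⟨(fiberSumEquiv _ _ _ _ _ (hsX N) n).trans
        ((eN.sumCongr eShifted).trans (fiberSumEquiv _ _ _ _ _ (hsY N) n).symm)⟩

end WeightFibers

theorem Multiset.filter_ne_add_replicate_count {α : Type*} [DecidableEq α] (s : Multiset α)
    (a : α) : s.filter (· ≠ a) + Multiset.replicate (s.count a) a = s := by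
  conv_rhs => rw [← Multiset.filter_add_not (· ≠ a) s]
  simp only [ne_eq, not_not, Multiset.filter_eq']

namespace Sym

theorem mem_of_mem_erase {α : Type*} [DecidableEq α] {n : ℕ} {s : Sym α (n + 1)} {a b : α}
    {h : a ∈ s} (hb : b ∈ s.erase a h) : b ∈ s := by
  rw [← Sym.mem_coe, Sym.coe_erase] at hb
  exact Multiset.mem_of_mem_erase hb

theorem map_sub_one_map_add_one {n : ℕ} {s : Sym ℕ n} (h : 0 ∉ s) :
    (s.map (· - 1)).map (· + 1) = s :=
  (Sym.map_map _ _ _).trans <| (Sym.map_congr fun _ hx =>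
    Nat.sub_add_cancel (Nat.pos_of_ne_zero (ne_of_mem_of_not_mem hx h))).trans (Sym.map_id' s)

def natSuccEquiv (N : ℕ) : Sym ℕ (N + 1) ≃ Sym ℕ N ⊕ Sym ℕ (N + 1) where
  toFun s := if h : 0 ∈ s then .inl (s.erase 0 h) else .inr (s.map (· - 1))
  invFun := Sum.elim (0 ::ₛ ·) (Sym.map (· + 1))
  left_inv s := by
    by_cases h : 0 ∈ s
    · simp [h, Sym.cons_erase]
    · simp only [h, dite_false, Sum.elim_inr]
      exact map_sub_one_map_add_one h
  right_inv s := by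
    rcases s with s | s
    · simp [Sym.erase_cons_head]
    · have h : 0 ∉ s.map (· + 1) := by simp [Sym.mem_map]
      simp [h, Sym.map_map]

theorem sum_natSuccEquiv_symm (N : ℕ) (s : Sym ℕ N ⊕ Sym ℕ (N + 1)) :
    ((natSuccEquiv N).symm s : Multiset ℕ).sum =
      Sum.elim (fun t : Sym ℕ N => (t : Multiset ℕ).sum)
        (fun t : Sym ℕ (N + 1) => (t : Multiset ℕ).sum + (N + 1)) s := by
  rcases s with s | s
  · simp [natSuccEquiv, Sym.coe_cons]
  · simp [natSuccEquiv, Sym.coe_map, Multiset.sum_map_add]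
    omega

end Sym

/-- `γ` is a partition in an `N × M` box, padded with zeros to exactly `N` entries. -/
abbrev BoxPair (M N : ℕ) : Type :=
  {p : Multiset ℕ × Sym ℕ N //
    (∀ x ∈ p.1, M < x ∧ x ≤ M + N) ∧ ∀ x ∈ p.2, x ≤ M}

namespace BoxPair

variable {M N : ℕ}

def weight (p : BoxPair M N) : ℕ := p.1.1.sum + (p.1.2 : Multiset ℕ).sum

def consZero (p : BoxPair M N) : BoxPair M (N + 1) :=
  ⟨(p.1.1, 0 ::ₛ p.1.2), fun x hx => by have := p.2.1 x hx; omega,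
    by simpa [Sym.mem_cons] using p.2.2⟩

def raise (p : BoxPair M (N + 1)) : BoxPair M (N + 1) :=
  if hM : M ∈ p.1.2 then
    ⟨((M + N + 1) ::ₘ p.1.1, 0 ::ₛ p.1.2.erase M hM), by simpa using p.2.1, by
      simpa [Sym.mem_cons] using fun x hx => p.2.2 x (Sym.mem_of_mem_erase hx)⟩
  else
    ⟨(p.1.1, p.1.2.map (· + 1)), p.2.1, by
      simpa [Sym.mem_map] using fun x hx => by
        have := p.2.2 x hx; have : x ≠ M := by rintro rfl; exact hM hx
        omega⟩

def succEquiv (M N : ℕ) : BoxPair M (N + 1) ≃ BoxPair M N ⊕ BoxPair M (N + 1) where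
  toFun p :=
    if h0 : 0 ∈ p.1.2 then
      if hT : M + N + 1 ∈ p.1.1 then
        .inr ⟨(p.1.1.erase (M + N + 1), M ::ₛ p.1.2.erase 0 h0),
          fun x hx => p.2.1 x (Multiset.mem_of_mem_erase hx), by
          simpa [Sym.mem_cons] using fun x hx => p.2.2 x (Sym.mem_of_mem_erase hx)⟩
      else
        .inl ⟨(p.1.1, p.1.2.erase 0 h0), fun x hx => by
          have := p.2.1 x hx; have : x ≠ M + N + 1 := by rintro rfl; exact hT hx
          omega, fun x hx => p.2.2 x (Sym.mem_of_mem_erase (h := h0) hx)⟩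
    else
      .inr ⟨(p.1.1, p.1.2.map (· - 1)), p.2.1, by
        simpa [Sym.mem_map] using fun x hx => (p.2.2 x hx).trans' (Nat.sub_le x 1)⟩
  invFun := Sum.elim consZero raise
  left_inv := by
    rintro ⟨⟨β, γ⟩, hβ, hγ⟩
    by_cases h0 : 0 ∈ γ
    · by_cases hT : M + N + 1 ∈ β
      · simp only [h0, hT, dite_true, Sum.elim_inr, raise]
        rw [dif_pos (Sym.mem_cons_self _ _)]
        exact Subtype.ext (Prod.ext (Multiset.cons_erase hT)
          (by simp [Sym.erase_cons_head, Sym.cons_erase]))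
      · simp only [h0, hT, dite_true, dite_false, Sum.elim_inl, consZero]
        exact Subtype.ext (Prod.ext rfl (Sym.cons_erase h0))
    · have hM : M ∉ γ.map (· - 1) := by
        simp only [Sym.mem_map, not_exists, not_and]
        intro x hx
        have := hγ x hx; have : x ≠ 0 := by rintro rfl; exact h0 hx
        omega
      simp only [h0, dite_false, Sum.elim_inr, raise]
      rw [dif_neg hM]
      exact Subtype.ext (Prod.ext rfl (Sym.map_sub_one_map_add_one h0))
  right_inv := by
    rintro (⟨⟨β, γ⟩, hβ, hγ⟩ | ⟨⟨β, γ⟩, hβ, hγ⟩)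
    · have hT : M + N + 1 ∉ β := fun h => by have := hβ _ h; omega
      simp [consZero, hT, Sym.erase_cons_head]
    · by_cases hM : M ∈ γ
      · simp only [Sum.elim_inr, raise, hM, dite_true]
        rw [dif_pos (Sym.mem_cons_self _ _), dif_pos (Multiset.mem_cons_self _ _)]
        exact congrArg Sum.inr (Subtype.ext (Prod.ext (Multiset.erase_cons_head _ _)
          (by simp [Sym.erase_cons_head, Sym.cons_erase])))
      · have h0 : 0 ∉ γ.map (· + 1) := by simp [Sym.mem_map]
        simp only [Sum.elim_inr, raise, hM, dite_false]
        rw [dif_neg h0]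
        exact congrArg Sum.inr (Subtype.ext (Prod.ext rfl (by simp [Sym.map_map])))

theorem weight_succEquiv_symm (s : BoxPair M N ⊕ BoxPair M (N + 1)) :
    ((succEquiv M N).symm s).weight = Sum.elim weight (fun p => p.weight + (N + 1)) s := by
  rcases s with p | p
  · simp [succEquiv, consZero, weight, Sym.coe_cons]
  · simp only [succEquiv, Equiv.coe_fn_symm_mk, Sum.elim_inr, raise]
    split_ifs with hM
    · have := Multiset.sum_erase (Sym.mem_coe.mpr hM)
      simp only [weight, Sym.coe_cons, Sym.coe_erase, Multiset.sum_cons]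
      omega
    · simp [weight, Sym.coe_map, Multiset.sum_map_add]
      omega

theorem fst_eq_zero (p : BoxPair M 0) : p.1.1 = 0 :=
  Multiset.eq_zero_of_forall_notMem fun x hx => by have := p.2.1 x hx; omega

def equivSymZero (M : ℕ) : BoxPair M 0 ≃ Sym ℕ 0 where
  toFun p := p.1.2
  invFun γ := ⟨(0, γ), by simp, by simp [Sym.eq_nil_of_card_zero γ, Sym.notMem_nil]⟩
  left_inv p := Subtype.ext (Prod.ext p.fst_eq_zero.symm rfl)
  right_inv _ := rfl

theorem exists_equiv_sym (M N : ℕ) :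
    ∃ e : BoxPair M N ≃ Sym ℕ N, ∀ p, (e p : Multiset ℕ).sum = p.weight :=
  exists_weight_equiv_of_split (X := BoxPair M) (Y := Sym ℕ) (fun _ => weight)
    (fun _ s => (s : Multiset ℕ).sum) (· + 1) (fun _ => Nat.succ_pos _)
    (equivSymZero M) (fun p => by simp [equivSymZero, weight, p.fst_eq_zero])
    (succEquiv M) (fun _ => weight_succEquiv_symm) Sym.natSuccEquiv Sym.sum_natSuccEquiv_symm N

end BoxPair

namespace Partn

theorem ext_coe {p q : Partn} (h : (p.parts : Multiset ℕ) = q.parts) : p = q := by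
  obtain ⟨l₁, s₁, _⟩ := p
  obtain ⟨l₂, s₂, _⟩ := q
  obtain rfl := List.Perm.eq_of_pairwise' s₁ s₂ (Multiset.coe_eq_coe.mp h)
  rfl

theorem wt_eq_sum_coe (p : Partn) : p.wt = (p.parts : Multiset ℕ).sum :=
  (Multiset.sum_coe _).symm

def ofMultiset (s : Multiset ℕ) (hs : ∀ x ∈ s, 0 < x) : Partn :=
  ⟨s.sort (· ≥ ·), Multiset.pairwise_sort _ _,
    fun x hx => hs x ((Multiset.mem_sort _).mp hx)⟩

@[simp]
theorem coe_parts_ofMultiset (s : Multiset ℕ) (hs : ∀ x ∈ s, 0 < x) :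
    ((ofMultiset s hs).parts : Multiset ℕ) = s :=
  Multiset.sort_eq _ _

def filter (p : Partn) (P : ℕ → Prop) [DecidablePred P] : Partn :=
  ⟨p.parts.filter (P ·), p.sorted.filter _, fun x hx => p.pos x (List.mem_of_mem_filter hx)⟩

theorem coe_parts_filter (p : Partn) (P : ℕ → Prop) [DecidablePred P] :
    ((p.filter P).parts : Multiset ℕ) = (p.parts : Multiset ℕ).filter P :=
  rfl

def toSym (p : Partn) (N : ℕ) (h : p.len ≤ N) : Sym ℕ N :=
  ⟨(p.parts : Multiset ℕ) + Multiset.replicate (N - p.len) 0, by simp [len] at h ⊢; omega⟩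

theorem sum_toSym (p : Partn) (N : ℕ) (h : p.len ≤ N) :
    ((p.toSym N h : Sym ℕ N) : Multiset ℕ).sum = p.wt := by
  simp [toSym, wt]

theorem mem_toSym {p : Partn} {N : ℕ} {h : p.len ≤ N} {x : ℕ} (hx : x ∈ p.toSym N h) :
    x ∈ p.parts ∨ x = 0 := by
  have hx' : x ∈ (p.parts : Multiset ℕ) + Multiset.replicate (N - p.len) 0 := hx
  exact (Multiset.mem_add.mp hx').imp Multiset.mem_coe.mp Multiset.eq_of_mem_replicate

def ofSym {N : ℕ} (s : Sym ℕ N) : Partn :=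
  ofMultiset ((s : Multiset ℕ).filter (· ≠ 0)) fun _ hx =>
    Nat.pos_of_ne_zero (Multiset.mem_filter.mp hx).2

theorem coe_parts_ofSym {N : ℕ} (s : Sym ℕ N) :
    ((ofSym s).parts : Multiset ℕ) = (s : Multiset ℕ).filter (· ≠ 0) :=
  coe_parts_ofMultiset _ _

theorem mem_ofSym {N : ℕ} {s : Sym ℕ N} {x : ℕ} (hx : x ∈ (ofSym s).parts) : x ∈ s := by
  rw [← Multiset.mem_coe, coe_parts_ofSym] at hx
  exact Multiset.mem_of_mem_filter hx

theorem wt_ofSym {N : ℕ} (s : Sym ℕ N) : (ofSym s).wt = (s : Multiset ℕ).sum := by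
  conv_rhs => rw [← Multiset.filter_ne_add_replicate_count (s : Multiset ℕ) 0]
  simp [wt, ← coe_parts_ofSym]

theorem len_ofSym_le {N : ℕ} (s : Sym ℕ N) : (ofSym s).len ≤ N := by
  have := Multiset.card_le_card (Multiset.filter_le (· ≠ 0) (s : Multiset ℕ))
  rwa [Sym.card_coe, ← coe_parts_ofSym, Multiset.coe_card] at this

theorem ofSym_toSym (p : Partn) (N : ℕ) (h : p.len ≤ N) : ofSym (p.toSym N h) = p := by
  apply ext_coe
  rw [coe_parts_ofSym, toSym, Sym.coe_mk, Multiset.filter_add,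
    Multiset.filter_eq_self.mpr fun x hx => (p.pos x hx).ne',
    Multiset.filter_eq_nil.mpr fun x hx => by simp [Multiset.eq_of_mem_replicate hx], add_zero]

theorem toSym_ofSym {N : ℕ} (s : Sym ℕ N) : (ofSym s).toSym N (len_ofSym_le s) = s := by
  have hsplit := Multiset.filter_ne_add_replicate_count (s : Multiset ℕ) 0
  have hcount : N - (ofSym s).len = (s : Multiset ℕ).count 0 := by
    have := congrArg Multiset.card hsplit
    rw [Multiset.card_add, Multiset.card_replicate, Sym.card_coe, ← coe_parts_ofSym,
      Multiset.coe_card] at this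
    unfold len; omega
  ext1
  simp only [toSym, Sym.coe_mk, hcount, coe_parts_ofSym, hsplit]

end Partn

namespace AlgorithmZ

abbrev Source (M N : ℕ) : Type :=
  {p : Partn × Partn //
    (∀ x ∈ p.1.parts, x ≤ M + N) ∧ p.2.len ≤ N ∧ (∀ x ∈ p.2.parts, x ≤ M)}

abbrev Target (M N : ℕ) : Type :=
  {q : Partn × Partn // q.1.len ≤ N ∧ (∀ x ∈ q.2.parts, x ≤ M)}

abbrev SmallParts (M : ℕ) : Type := {δ : Partn // ∀ x ∈ δ.parts, x ≤ M}

def sourceEquiv (M N : ℕ) : Source M N ≃ SmallParts M × BoxPair M N where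
  toFun p :=
    (⟨p.1.1.filter (· ≤ M), fun x hx => by simpa using (List.mem_filter.mp hx).2⟩,
      ⟨((p.1.1.parts : Multiset ℕ).filter (¬ · ≤ M), p.1.2.toSym N p.2.2.1),
        fun x hx => by
          simp only [Multiset.mem_filter, Multiset.mem_coe] at hx
          exact ⟨not_le.mp hx.2, p.2.1 x hx.1⟩,
        fun x hx =>
          (Partn.mem_toSym (h := p.2.2.1) hx).elim (p.2.2.2 x) fun h => h ▸ Nat.zero_le M⟩)
  invFun b :=
    ⟨(Partn.ofMultiset (b.1.1.parts + b.2.1.1) fun x hx => by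
        rcases Multiset.mem_add.mp hx with h | h
        · exact b.1.1.pos x (Multiset.mem_coe.mp h)
        · exact (Nat.zero_le M).trans_lt (b.2.2.1 x h).1,
      Partn.ofSym b.2.1.2),
      fun x hx => by
        rw [← Multiset.mem_coe, Partn.coe_parts_ofMultiset] at hx
        rcases Multiset.mem_add.mp hx with h | h
        · exact (b.1.2 x h).trans (Nat.le_add_right M N)
        · exact (b.2.2.1 x h).2,
      Partn.len_ofSym_le _, fun x hx => b.2.2.2 x (Partn.mem_ofSym hx)⟩
  left_inv p := by
    apply Subtype.ext
    refine Prod.ext (Partn.ext_coe ?_) (Partn.ofSym_toSym _ _ p.2.2.1)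
    dsimp only
    rw [Partn.coe_parts_ofMultiset, Partn.coe_parts_filter, Multiset.filter_add_not]
  right_inv := by
    rintro ⟨⟨δ, hδ⟩, ⟨β, γ⟩, hβ, hγ⟩
    have hsmall : (δ.parts : Multiset ℕ).filter (· ≤ M) = δ.parts :=
      Multiset.filter_eq_self.mpr fun x hx => hδ x hx
    have hlarge : β.filter (· ≤ M) = 0 :=
      Multiset.filter_eq_nil.mpr fun x hx => not_le.mpr (hβ x hx).1
    have hsmall' : (δ.parts : Multiset ℕ).filter (¬ · ≤ M) = 0 :=
      Multiset.filter_eq_nil.mpr fun x hx => not_not.mpr (hδ x hx)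
    have hlarge' : β.filter (¬ · ≤ M) = β :=
      Multiset.filter_eq_self.mpr fun x hx => not_le.mpr (hβ x hx).1
    refine Prod.ext (Subtype.ext ?_) (Subtype.ext (Prod.ext ?_ ?_)) <;> dsimp only
    · apply Partn.ext_coe
      rw [Partn.coe_parts_filter, Partn.coe_parts_ofMultiset, Multiset.filter_add, hsmall, hlarge,
        add_zero]
    · rw [Partn.coe_parts_ofMultiset, Multiset.filter_add, hsmall', hlarge', zero_add]
    · exact Partn.toSym_ofSym γ

variable {M N : ℕ}

theorem wt_sourceEquiv (p : Source M N) :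
    (sourceEquiv M N p).1.1.wt + (sourceEquiv M N p).2.weight = p.1.1.wt + p.1.2.wt := by
  simp only [sourceEquiv, Equiv.coe_fn_mk, BoxPair.weight, Partn.sum_toSym, Partn.wt_eq_sum_coe,
    Partn.coe_parts_filter]
  rw [← add_assoc, ← Multiset.sum_add, Multiset.filter_add_not]

def targetEquiv (M N : ℕ) : Target M N ≃ Sym ℕ N × SmallParts M where
  toFun q := (q.1.1.toSym N q.2.1, ⟨q.1.2, q.2.2⟩)
  invFun b := ⟨(Partn.ofSym b.1, b.2.1), Partn.len_ofSym_le _, b.2.2⟩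
  left_inv q := Subtype.ext (Prod.ext (Partn.ofSym_toSym _ _ q.2.1) rfl)
  right_inv _ := Prod.ext (Partn.toSym_ofSym _) rfl

end AlgorithmZ

theorem algorithmZ_refinement_general (M N : ℕ) :
    ∃ F : {p : Partn × Partn // (∀ x ∈ p.1.parts, x ≤ M + N) ∧
              p.2.len ≤ N ∧ (∀ x ∈ p.2.parts, x ≤ M)} →
          {q : Partn × Partn // q.1.len ≤ N ∧ (∀ x ∈ q.2.parts, x ≤ M)},
      Function.Bijective F ∧
      ∀ p, p.val.1.wt + p.val.2.wt = (F p).val.1.wt + (F p).val.2.wt ∧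
        ((p.val.1.parts.filter (fun x => decide (x ≤ M)) : Multiset ℕ)) =
          ((F p).val.2.parts : Multiset ℕ) := by
  obtain ⟨e, he⟩ := BoxPair.exists_equiv_sym M N
  let F := (AlgorithmZ.sourceEquiv M N).trans (((Equiv.refl _).prodCongr e).trans
    ((Equiv.prodComm _ _).trans (AlgorithmZ.targetEquiv M N).symm))
  refine ⟨F, F.bijective, fun p => ⟨?_, rfl⟩⟩
  calc p.1.1.wt + p.1.2.wt
      = (AlgorithmZ.sourceEquiv M N p).1.1.wt + (AlgorithmZ.sourceEquiv M N p).2.weight :=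
        (AlgorithmZ.wt_sourceEquiv p).symm
    _ = (F p).1.1.wt + (F p).1.2.wt := by
        rw [add_comm]
        simp [F, AlgorithmZ.targetEquiv, Partn.wt_ofSym, he]

/-- Refinement of Algorithm Z: a weight-preserving bijection `F` from pairs `(α, γ)`
with parts of `α` at most `M + N` and `γ` having at most `N` parts each at most `M`,
onto pairs `(ξ, δ)` with `ξ` having at most `N` parts and parts of `δ` at most `M`,
such that the multiset of parts of `α` not exceeding `M` coincides with the multiset
of parts of `δ`. -/
theorem algorithmZ_refinement (M N : ℕ) (hN : 0 < N) :
    ∃ F : {p : Partn × Partn // (∀ x ∈ p.1.parts, x ≤ M + N) ∧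
              p.2.len ≤ N ∧ (∀ x ∈ p.2.parts, x ≤ M)} →
          {q : Partn × Partn // q.1.len ≤ N ∧ (∀ x ∈ q.2.parts, x ≤ M)},
      Function.Bijective F ∧
      ∀ p, p.val.1.wt + p.val.2.wt = (F p).val.1.wt + (F p).val.2.wt ∧
        ((p.val.1.parts.filter (fun x => decide (x ≤ M)) : Multiset ℕ)) =
          ((F p).val.2.parts : Multiset ℕ) :=
  algorithmZ_refinement_general M N
end

section
/- Let k ≥ 3, m ≥ 0 and n ≥ k−1 be integers. Then #{Δ ∈ P_k(m,n) : d_1 ≠ d_{k−1}} ≤ #{Δ ∈ P_k(m,n+1) : there exists 1 ≤ j ≤ k−2 with d_j > d_{j+1}, and, for the smallest such index i, γ^i_1 > γ^i_2}. -/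
/-- The type of `(2k-1)`-tuples `(α, β, γ^1, …, γ^{k-2}, ϖ^1, …, ϖ^{k-1})`. -/
abbrev PTuple (k : ℕ) : Type :=
  Partn × Partn × (Fin (k - 2) → Partn) × (Fin (k - 1) → Partn)

/-- `d_j := ℓ(ϖ^j)` (1-indexed, `0` out of range). -/
def dIdx (k : ℕ) (w : Fin (k - 1) → Partn) (j : ℕ) : ℕ :=
  if h : j - 1 < k - 1 then (w ⟨j - 1, h⟩).len else 0

/-- `γ^j` (1-indexed, the empty partition out of range). -/
def gIdx (k : ℕ) (g : Fin (k - 2) → Partn) (j : ℕ) : Partn :=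
  if h : j - 1 < k - 2 then g ⟨j - 1, h⟩ else Partn.empty

/-- Membership in Garvan-type set `P_k(m, n)` of `(2k-1)`-tuples of partitions. -/
def PkMem (k : ℕ) (m : ℤ) (n : ℕ) (t : PTuple k) : Prop :=
  (∀ i : Fin (k - 1), (t.2.2.2 i).parts =
      List.replicate (t.2.2.2 i).len (t.2.2.2 i).len) ∧
  (∀ j, 1 ≤ j → j + 1 ≤ k - 1 → dIdx k t.2.2.2 (j + 1) ≤ dIdx k t.2.2.2 j) ∧
  1 ≤ dIdx k t.2.2.2 (k - 1) ∧
  (∀ x ∈ t.1.parts, x ≤ dIdx k t.2.2.2 (k - 1)) ∧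
  (∀ x ∈ t.2.1.parts, x ≤ dIdx k t.2.2.2 (k - 1)) ∧
  (t.1.len : ℤ) - (t.2.1.len : ℤ) = m ∧
  (∀ j, 1 ≤ j → j ≤ k - 2 →
      (gIdx k t.2.2.1 j).len ≤ dIdx k t.2.2.2 j - dIdx k t.2.2.2 (j + 1)) ∧
  t.1.wt + t.2.1.wt + (∑ i, (t.2.2.1 i).wt) + (∑ i, (t.2.2.2 i).wt) = n

theorem List.finite_setOf_length_le_forall_mem {α : Type*} {s : Set α} (hs : s.Finite)
    (n : ℕ) : {l : List α | l.length ≤ n ∧ ∀ x ∈ l, x ∈ s}.Finite := by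
  have := hs.to_subtype
  refine ((List.finite_length_le s n).image (List.map Subtype.val)).subset ?_
  rintro l ⟨hlen, hmem⟩
  exact ⟨l.pmap Subtype.mk hmem, by simpa using hlen, by simp [List.map_pmap]⟩

namespace Partn

theorem ext {p q : Partn} (h : p.parts = q.parts) : p = q := by
  cases p; cases q; simpa using h

theorem finite_setOf_wt_le (N : ℕ) : {p : Partn | p.wt ≤ N}.Finite := by
  refine ((List.finite_setOf_length_le_forall_mem (Set.finite_Iic N) N).preimage
    fun p _ q _ h => ext h).subset ?_
  intro p hp
  exact ⟨(List.length_le_sum_of_one_le _ p.pos).trans hp,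
    fun x hx => (List.le_sum_of_mem hx).trans hp⟩

/-- Add one to the largest part; the empty partition becomes `(1)`. -/
def succLargest (p : Partn) : Partn where
  parts := (p.parts.headI + 1) :: p.parts.tail
  sorted := by
    obtain ⟨parts, sorted, -⟩ := p
    cases parts with
    | nil => simp
    | cons a r =>
      rw [List.pairwise_cons] at sorted ⊢
      exact ⟨fun b hb => (sorted.1 b hb).trans a.le_succ, sorted.2⟩
  pos x hx := by
    rcases List.mem_cons.mp hx with rfl | hx
    · exact Nat.succ_pos _
    · exact p.pos x (List.mem_of_mem_tail hx)

theorem wt_succLargest (p : Partn) : p.succLargest.wt = p.wt + 1 := by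
  have := List.headI_add_tail_sum p.parts
  simp only [wt, succLargest, List.sum_cons]
  omega

theorem len_succLargest (p : Partn) : p.succLargest.len = max p.len 1 := by
  obtain ⟨_ | ⟨a, r⟩, -, -⟩ := p <;> simp [len, succLargest]

theorem part_two_lt_part_one_succLargest (p : Partn) :
    p.succLargest.part 2 < p.succLargest.part 1 := by
  obtain ⟨_ | ⟨a, _ | ⟨b, r⟩⟩, sorted, -⟩ := p
  · simp [part, succLargest]
  · simp [part, succLargest]
  · have : b ≤ a := (List.pairwise_cons.mp sorted).1 b (by simp)
    simpa [part, succLargest] using Nat.lt_succ_of_le this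

theorem succLargest_injective : Function.Injective succLargest := by
  rintro ⟨_ | ⟨a, r⟩, _, hp⟩ ⟨_ | ⟨b, s⟩, _, hq⟩ h <;>
    simp only [succLargest, mk.injEq, List.cons.injEq, List.headI_nil, List.headI_cons,
      List.tail_nil, List.tail_cons, Nat.default_eq_zero, add_left_inj] at h ⊢
  · exact absurd (hq b List.mem_cons_self) (by omega)
  · exact absurd (hp a List.mem_cons_self) (by omega)
  · exact h

end Partn

theorem finite_setOf_pkMem (k : ℕ) (m : ℤ) (n : ℕ) :
    {t : PTuple k | PkMem k m n t}.Finite := by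
  have hS := Partn.finite_setOf_wt_le n
  refine (hS.prod (hS.prod ((Set.Finite.pi fun _ => hS).prod
    (Set.Finite.pi fun _ => hS)))).subset ?_
  rintro ⟨a, b, g, w⟩ ⟨-, -, -, -, -, -, -, hsum⟩
  have hg i : (g i).wt ≤ ∑ j, (g j).wt :=
    Finset.single_le_sum (f := fun j => (g j).wt) (fun _ _ => Nat.zero_le _) (Finset.mem_univ i)
  have hw i : (w i).wt ≤ ∑ j, (w j).wt :=
    Finset.single_le_sum (f := fun j => (w j).wt) (fun _ _ => Nat.zero_le _) (Finset.mem_univ i)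
  simp only [Set.mem_prod, Set.mem_pi, Set.mem_univ, Set.mem_ofPred_eq, forall_const] at hsum ⊢
  exact ⟨by omega, by omega, fun i => (hg i).trans (by omega), fun i => (hw i).trans (by omega)⟩

/-- `0` when there is no descent, as `sInf ∅ = 0`. -/
noncomputable def firstDescent (d : ℕ → ℕ) : ℕ :=
  sInf {i | 1 ≤ i ∧ d (i + 1) < d i}

theorem firstDescent_spec {d : ℕ → ℕ} {N : ℕ} (hN : 1 ≤ N)
    (hmono : ∀ j, 1 ≤ j → j + 1 ≤ N → d (j + 1) ≤ d j) (hne : d 1 ≠ d N) :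
    1 ≤ firstDescent d ∧ firstDescent d + 1 ≤ N ∧
      d (firstDescent d + 1) < d (firstDescent d) ∧
      ∀ j, 1 ≤ j → j < firstDescent d → d (j + 1) = d j := by
  obtain ⟨i, hi1, hiN, hi⟩ : ∃ i, 1 ≤ i ∧ i + 1 ≤ N ∧ d (i + 1) < d i := by
    by_contra! hflat
    have hconst : ∀ j, 1 ≤ j → j ≤ N → d j = d 1 := by
      intro j hj
      induction j, hj using Nat.le_induction with
      | base => exact fun _ => rfl
      | succ j hj ih =>
        intro hjN
        rw [← ih (by omega)]
        exact le_antisymm (hmono j hj hjN) (hflat j hj hjN)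
    exact hne (hconst N hN le_rfl).symm
  have hmem := Nat.sInf_mem (s := {i | 1 ≤ i ∧ d (i + 1) < d i}) ⟨i, hi1, hi⟩
  have hle : firstDescent d ≤ i := Nat.sInf_le ⟨hi1, hi⟩
  refine ⟨hmem.1, by omega, hmem.2, fun j hj hjlt => ?_⟩
  have hnot : ¬(1 ≤ j ∧ d (j + 1) < d j) := Nat.notMem_of_lt_sInf hjlt
  exact le_antisymm (hmono j hj (by omega)) (by omega)

/-- `i` is 1-indexed, as in `gIdx`. -/
def succLargestAt {n : ℕ} (g : Fin n → Partn) (i : ℕ) : Fin n → Partn :=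
  fun j => if (j : ℕ) + 1 = i then (g j).succLargest else g j

theorem gIdx_succLargestAt {k : ℕ} (g : Fin (k - 2) → Partn) (i : ℕ) {j : ℕ} (hj : 1 ≤ j)
    (hjk : j ≤ k - 2) :
    gIdx k (succLargestAt g i) j = if j = i then (gIdx k g j).succLargest else gIdx k g j := by
  have hj' : j - 1 < k - 2 := by omega
  have hiff : j - 1 + 1 = i ↔ j = i := by omega
  simp only [gIdx, succLargestAt, hj', dite_true, hiff]

theorem sum_wt_succLargestAt {n : ℕ} (g : Fin n → Partn) {i : ℕ} (hi : 1 ≤ i) (hin : i ≤ n) :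
    ∑ j, (succLargestAt g i j).wt = ∑ j, (g j).wt + 1 := by
  have hterm (j : Fin n) :
      (succLargestAt g i j).wt = (g j).wt + if j = ⟨i - 1, by omega⟩ then 1 else 0 := by
    have hiff : (j : ℕ) + 1 = i ↔ j = ⟨i - 1, by omega⟩ := by
      simp only [Fin.ext_iff]
      omega
    simp only [succLargestAt, hiff]
    split_ifs <;> simp [Partn.wt_succLargest]
  simp [hterm, Finset.sum_add_distrib]

theorem succLargestAt_injective {n : ℕ} (i : ℕ) :
    Function.Injective fun g : Fin n → Partn => succLargestAt g i := by
  intro g g' h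
  funext j
  have hj := congrFun h j
  simp only [succLargestAt] at hj
  split_ifs at hj
  · exact Partn.succLargest_injective hj
  · exact hj

noncomputable def bumpAtFirstDescent (k : ℕ) (t : PTuple k) : PTuple k :=
  (t.1, t.2.1, succLargestAt t.2.2.1 (firstDescent (dIdx k t.2.2.2)), t.2.2.2)

theorem bumpAtFirstDescent_injective (k : ℕ) : Function.Injective (bumpAtFirstDescent k) := by
  rintro ⟨a, b, g, w⟩ ⟨a', b', g', w'⟩ h
  simp only [bumpAtFirstDescent, Prod.mk.injEq] at h
  obtain ⟨rfl, rfl, hg, rfl⟩ := h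
  rw [succLargestAt_injective _ hg]

theorem bumpAtFirstDescent_mem {k : ℕ} {m : ℤ} {n : ℕ} {t : PTuple k} (ht : PkMem k m n t)
    (hne : dIdx k t.2.2.2 1 ≠ dIdx k t.2.2.2 (k - 1)) :
    PkMem k m (n + 1) (bumpAtFirstDescent k t) ∧
      ∃ i, 1 ≤ i ∧ i ≤ k - 2 ∧
        dIdx k t.2.2.2 (i + 1) < dIdx k t.2.2.2 i ∧
        (∀ j, 1 ≤ j → j < i → dIdx k t.2.2.2 (j + 1) = dIdx k t.2.2.2 j) ∧
        (gIdx k (bumpAtFirstDescent k t).2.2.1 i).part 2 <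
          (gIdx k (bumpAtFirstDescent k t).2.2.1 i).part 1 := by
  obtain ⟨a, b, g, w⟩ := t
  obtain ⟨hsq, hmono, hd, hα, hβ, hlen, hγ, hsum⟩ := ht
  dsimp only [bumpAtFirstDescent] at *
  have hk : 1 ≤ k - 1 := by
    by_contra hk0
    simp [dIdx, show k - 1 = 0 by omega] at hd
  obtain ⟨hi1, hik, hdrop, hflat⟩ := firstDescent_spec hk hmono hne
  set i := firstDescent (dIdx k w)
  refine ⟨⟨hsq, hmono, hd, hα, hβ, hlen, fun j hj hjk => ?_, ?_⟩, i, hi1, by omega, hdrop, hflat, ?_⟩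
  · dsimp only
    rw [gIdx_succLargestAt _ _ hj hjk]
    split_ifs with hji
    · subst hji
      rw [Partn.len_succLargest]
      exact max_le (hγ _ hj hjk) (by omega)
    · exact hγ j hj hjk
  · dsimp only
    rw [sum_wt_succLargestAt g hi1 (by omega)]
    omega
  · rw [gIdx_succLargestAt _ _ hi1 (by omega), if_pos rfl]
    exact Partn.part_two_lt_part_one_succLargest _

theorem lem_pp1_general (k : ℕ) (m : ℤ) (n : ℕ) :
    {t : PTuple k | PkMem k m n t ∧
        dIdx k t.2.2.2 1 ≠ dIdx k t.2.2.2 (k - 1)}.ncard ≤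
      {t : PTuple k | PkMem k m (n + 1) t ∧
        ∃ i, 1 ≤ i ∧ i ≤ k - 2 ∧ dIdx k t.2.2.2 (i + 1) < dIdx k t.2.2.2 i ∧
          (∀ j, 1 ≤ j → j < i → dIdx k t.2.2.2 (j + 1) = dIdx k t.2.2.2 j) ∧
          (gIdx k t.2.2.1 i).part 2 < (gIdx k t.2.2.1 i).part 1}.ncard :=
  Set.ncard_le_ncard_of_injOn (bumpAtFirstDescent k)
    (fun _ ht => bumpAtFirstDescent_mem ht.1 ht.2) (bumpAtFirstDescent_injective k).injOn
    ((finite_setOf_pkMem k m (n + 1)).subset fun _ ht => ht.1)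

/-- Lemma 5.4 (restated). -/
theorem lem_pp1 (k : ℕ) (m : ℤ) (n : ℕ) (hk : 3 ≤ k) (hm : 0 ≤ m)
    (hn : k - 1 ≤ n) :
    {t : PTuple k | PkMem k m n t ∧
        dIdx k t.2.2.2 1 ≠ dIdx k t.2.2.2 (k - 1)}.ncard ≤
      {t : PTuple k | PkMem k m (n + 1) t ∧
        ∃ i, 1 ≤ i ∧ i ≤ k - 2 ∧ dIdx k t.2.2.2 (i + 1) < dIdx k t.2.2.2 i ∧
          (∀ j, 1 ≤ j → j < i → dIdx k t.2.2.2 (j + 1) = dIdx k t.2.2.2 j) ∧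
          (gIdx k t.2.2.1 i).part 2 < (gIdx k t.2.2.1 i).part 1}.ncard :=
  lem_pp1_general k m n
end

section
/- Let k ≥ 3, m ≥ 0 and n ≥ k−1 be integers. Then #{Δ ∈ P_k(m,n) : d_1 = d_{k−1} ≥ 2, α_1 = d_1, α_2 = 0, and β_1 < d_1} = #{Δ ∈ P_k(m,n+1) : d_1 ≥ 3, d_i = d_1 − 1 for all 2 ≤ i ≤ k−2, d_{k−1} = d_1 − 2, γ^1 = ⋯ = γ^{k−2} = ∅, α_1 = d_1 − 2, and α_2 = 0}. -/
/-!
Both sets are in bijection with the pairs `(d, β)` with `d ≥ 2`, all parts of `β` less than `d`,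
`ℓ(β) = 1 - m` and `d + |β| + (k - 1) d² = n`. On the left, `d_1 = d_{k-1}` forces all `d_i` to
equal `d := d_1`, hence every `γ^i` is empty and `α = (d)`. On the right, writing `d := d_1 - 1`,
the sides are `d + 1, d, …, d, d - 1` and `α = (d - 1)`: the squares gain
`(d + 1)² + (d - 1)² - 2d² = 2` and `α` loses `1`, which accounts for `n + 1`.
-/

namespace Partn

theorem empty_parts : empty.parts = [] := rfl

/-- The partition `(a)`, or the empty partition when `a = 0`. -/
def single (a : ℕ) : Partn :=
  if ha : 0 < a then ⟨[a], List.pairwise_singleton _ _, by simpa⟩ else empty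

theorem single_parts {a : ℕ} (ha : 0 < a) : (single a).parts = [a] := by
  simp [single, ha]

theorem single_part_one {a : ℕ} (ha : 0 < a) : (single a).part 1 = a := by
  simp [part, single_parts ha]

theorem single_part_two {a : ℕ} (ha : 0 < a) : (single a).part 2 = 0 := by
  simp [part, single_parts ha]

def square (a : ℕ) : Partn :=
  ⟨List.replicate a a, List.pairwise_replicate.2 (Or.inr le_rfl),
    fun _ hx => by obtain ⟨h, rfl⟩ := List.mem_replicate.1 hx; omega⟩

@[simp] theorem square_parts (a : ℕ) : (square a).parts = List.replicate a a := rfl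

@[simp] theorem square_len (a : ℕ) : (square a).len = a := List.length_replicate ..

@[simp] theorem square_wt (a : ℕ) : (square a).wt = a ^ 2 := by
  simp [wt, List.sum_replicate, sq]

theorem parts_eq_singleton {p : Partn} {a : ℕ} (ha : 0 < a) (h1 : p.part 1 = a)
    (h2 : p.part 2 = 0) : p.parts = [a] := by
  rcases hp : p.parts with _ | ⟨x, _ | ⟨y, l⟩⟩
  · have : p.part 1 = 0 := by simp [part, hp]
    omega
  · have : p.part 1 = x := by simp [part, hp]
    rw [← this, h1]
  · have hy : p.part 2 = y := by simp [part, hp]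
    have := p.pos y (by simp [hp])
    omega

theorem part_one_lt_iff (p : Partn) {d : ℕ} (hd : 0 < d) :
    p.part 1 < d ↔ ∀ x ∈ p.parts, x < d := by
  have hs := p.sorted
  rcases hp : p.parts with _ | ⟨a, l⟩
  · simp [part, hp, hd]
  · rw [hp, List.pairwise_cons] at hs
    simp only [part, hp, List.mem_cons, forall_eq_or_imp]
    exact ⟨fun h => ⟨h, fun x hx => (hs.1 x hx).trans_lt h⟩, And.left⟩

end Partn

theorem dIdx_succ {k : ℕ} (w : Fin (k - 1) → Partn) (i : Fin (k - 1)) :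
    dIdx k w (i + 1) = (w i).len := by
  simp [dIdx]

theorem gIdx_succ {k : ℕ} (g : Fin (k - 2) → Partn) (i : Fin (k - 2)) :
    gIdx k g (i + 1) = g i := by
  simp [gIdx]

theorem gIdx_const_empty (k j : ℕ) : gIdx k (fun _ => Partn.empty) j = Partn.empty := by
  unfold gIdx; split <;> rfl

theorem eq_first_of_succ_le_of_first_eq_last {f : ℕ → ℕ} {N : ℕ}
    (hf : ∀ j, 1 ≤ j → j + 1 ≤ N → f (j + 1) ≤ f j) (h : f 1 = f N) :
    ∀ j, 1 ≤ j → j ≤ N → f j = f 1 := by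
  have anti : AntitoneOn f (Set.Icc 1 N) :=
    antitoneOn_of_succ_le Set.ordConnected_Icc fun j _ hj hj' => by
      simpa using hf j hj.1 (by simpa using hj'.2)
  intro j h1 h2
  exact le_antisymm (anti ⟨le_rfl, h1.trans h2⟩ ⟨h1, h2⟩ h1)
    (h ▸ anti ⟨h1, h2⟩ ⟨h1.trans h2, le_rfl⟩ h2)

/-- `α = (a)`, all `γ^i = ∅`, and `ϖ^j` is the square of side `d j` (so `d` is 1-indexed). -/
def PTuple.ofSides (k a : ℕ) (β : Partn) (d : ℕ → ℕ) : PTuple k :=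
  (Partn.single a, β, fun _ => Partn.empty, fun i => Partn.square (d (i + 1)))

namespace PTuple

variable {k a : ℕ} {β : Partn} {d : ℕ → ℕ}

theorem dIdx_ofSides {j : ℕ} (h1 : 1 ≤ j) (h2 : j ≤ k - 1) :
    dIdx k (ofSides k a β d).2.2.2 j = d j := by
  simp only [dIdx, ofSides, dif_pos (show j - 1 < k - 1 by omega), Partn.square_len]
  congr 1; omega

theorem eq_ofSides {t : PTuple k}
    (hsq : ∀ i, (t.2.2.2 i).parts = List.replicate (t.2.2.2 i).len (t.2.2.2 i).len)
    (hα : t.1.parts = [a]) (hγ : ∀ i, (t.2.2.1 i).parts = [])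
    (hd : ∀ j, 1 ≤ j → j ≤ k - 1 → dIdx k t.2.2.2 j = d j) :
    t = ofSides k a t.2.1 d := by
  have ha : 0 < a := t.1.pos a (hα ▸ List.mem_singleton_self a)
  obtain ⟨α, β, γ, w⟩ := t
  refine Prod.ext (Partn.ext ?_) (Prod.ext rfl (Prod.ext ?_ ?_))
  · rw [hα, ofSides, Partn.single_parts ha]
  · funext i; exact Partn.ext (hγ i)
  · funext i
    have hlen : (w i).len = d (i + 1) := by
      rw [← dIdx_succ, hd _ (by omega) (by have := i.isLt; omega)]
    exact Partn.ext ((hsq i).trans (by rw [hlen]; rfl))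

theorem pkMem_ofSides_iff {m : ℤ} {n : ℕ} (hk : 2 ≤ k) (ha : 0 < a) :
    PkMem k m n (ofSides k a β d) ↔
      (∀ j, 1 ≤ j → j + 1 ≤ k - 1 → d (j + 1) ≤ d j) ∧ 1 ≤ d (k - 1) ∧ a ≤ d (k - 1) ∧
      (∀ x ∈ β.parts, x ≤ d (k - 1)) ∧ 1 - (β.len : ℤ) = m ∧
      a + β.wt + ∑ j ∈ Finset.range (k - 1), d (j + 1) ^ 2 = n := by
  have hlast := dIdx_ofSides (a := a) (β := β) (d := d) (show 1 ≤ k - 1 by omega) le_rfl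
  have hwt : ∑ i, ((ofSides k a β d).2.2.2 i).wt = ∑ j ∈ Finset.range (k - 1), d (j + 1) ^ 2 := by
    simp only [ofSides, Partn.square_wt]
    exact Fin.sum_univ_eq_sum_range (fun j => d (j + 1) ^ 2) _
  have hmono : (∀ j, 1 ≤ j → j + 1 ≤ k - 1 →
      dIdx k (ofSides k a β d).2.2.2 (j + 1) ≤ dIdx k (ofSides k a β d).2.2.2 j) ↔
      ∀ j, 1 ≤ j → j + 1 ≤ k - 1 → d (j + 1) ≤ d j :=
    forall_congr' fun j => imp_congr_right fun h1 => imp_congr_right fun h2 => by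
      rw [dIdx_ofSides h1 (by omega), dIdx_ofSides (by omega) h2]
  simp only [PkMem, hlast, hwt, hmono]
  simp [ofSides, Partn.single_parts ha, gIdx_const_empty, Partn.empty_parts, Partn.len, Partn.wt]

theorem eq_of_ofSides_eq {a' : ℕ} {β' : Partn} {d' : ℕ → ℕ} (hk : 2 ≤ k)
    (h : ofSides k a β d = ofSides k a' β' d') : β = β' ∧ d 1 = d' 1 := by
  refine ⟨congrArg (·.2.1) h, ?_⟩
  have := congrArg (fun t : PTuple k => dIdx k t.2.2.2 1) h
  simpa only [dIdx_ofSides le_rfl (show 1 ≤ k - 1 by omega)] using this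

end PTuple

def stepSides (k d j : ℕ) : ℕ := if j = 1 then d + 1 else if j = k - 1 then d - 1 else d

theorem stepSides_one (k d : ℕ) : stepSides k d 1 = d + 1 := if_pos rfl

theorem stepSides_last {k : ℕ} (d : ℕ) (hk : 3 ≤ k) : stepSides k d (k - 1) = d - 1 := by
  rw [stepSides, if_neg (by omega), if_pos rfl]

theorem stepSides_mid {k d j : ℕ} (h1 : 2 ≤ j) (h2 : j ≤ k - 2) : stepSides k d j = d := by
  rw [stepSides, if_neg (by omega), if_neg (by omega)]

theorem stepSides_succ_le {k d j : ℕ} (hd : 1 ≤ d) (h1 : 1 ≤ j) (h2 : j + 1 ≤ k - 1) :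
    stepSides k d (j + 1) ≤ stepSides k d j := by
  unfold stepSides; split_ifs <;> omega

theorem sum_stepSides_sq {k d : ℕ} (hk : 3 ≤ k) (hd : 1 ≤ d) :
    ∑ j ∈ Finset.range (k - 1), stepSides k d (j + 1) ^ 2 = (k - 1) * d ^ 2 + 2 := by
  obtain ⟨l, rfl⟩ : ∃ l, k = l + 3 := ⟨k - 3, by omega⟩
  obtain ⟨e, rfl⟩ : ∃ e, d = e + 1 := ⟨d - 1, by omega⟩
  have hmid : ∀ j ∈ Finset.range l, stepSides (l + 3) (e + 1) (j + 1 + 1) ^ 2 = (e + 1) ^ 2 := by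
    intro j hj
    rw [Finset.mem_range] at hj
    rw [stepSides, if_neg (by omega), if_neg (by omega)]
  rw [show l + 3 - 1 = l + 1 + 1 by omega, Finset.sum_range_succ, Finset.sum_range_succ',
    Finset.sum_congr rfl hmid, Finset.sum_const, Finset.card_range, smul_eq_mul]
  simp only [stepSides, if_pos, if_neg (show l + 1 + 1 ≠ 1 by omega),
    if_pos (show l + 1 + 1 = l + 3 - 1 by omega), Nat.add_sub_cancel]
  ring

def Params (k : ℕ) (m : ℤ) (n : ℕ) : Set (ℕ × Partn) :=
  {p | 2 ≤ p.1 ∧ (∀ x ∈ p.2.parts, x < p.1) ∧ 1 - (p.2.len : ℤ) = m ∧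
    p.1 + p.2.wt + (k - 1) * p.1 ^ 2 = n}

theorem setOf_equalSides_eq_image {k : ℕ} {m : ℤ} {n : ℕ} (hk : 3 ≤ k) :
    {t : PTuple k | PkMem k m n t ∧
        dIdx k t.2.2.2 1 = dIdx k t.2.2.2 (k - 1) ∧ 2 ≤ dIdx k t.2.2.2 1 ∧
        t.1.part 1 = dIdx k t.2.2.2 1 ∧ t.1.part 2 = 0 ∧
        t.2.1.part 1 < dIdx k t.2.2.2 1} =
      (fun p => PTuple.ofSides k p.1 p.2 fun _ => p.1) '' Params k m n := by
  ext t
  constructor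
  · rintro ⟨ht, hfirst, hd, hα1, hα2, hβ⟩
    set d := dIdx k t.2.2.2 1
    have hconst := eq_first_of_succ_le_of_first_eq_last ht.2.1 hfirst
    have hγ : ∀ i, (t.2.2.1 i).parts = [] := fun i => by
      have hlen := ht.2.2.2.2.2.2.1 (i + 1) (by omega) (by omega)
      have h1 := hconst (i + 1) (by omega) (by omega)
      have h2 := hconst (i + 1 + 1) (by omega) (by omega)
      rw [gIdx_succ] at hlen
      exact List.eq_nil_of_length_eq_zero (show (t.2.2.1 i).len = 0 by omega)
    have heq := PTuple.eq_ofSides ht.1 (Partn.parts_eq_singleton (by omega) hα1 hα2) hγ hconst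
    rw [heq, PTuple.pkMem_ofSides_iff (by omega) (by omega)] at ht
    obtain ⟨-, -, -, -, hm, hn⟩ := ht
    refine ⟨(d, t.2.1), ⟨hd, (t.2.1.part_one_lt_iff (by omega)).1 hβ, hm, ?_⟩, heq.symm⟩
    simpa using hn
  · rintro ⟨⟨d, β⟩, ⟨hd, hβ, hm, hn⟩, rfl⟩
    have hβ' := (β.part_one_lt_iff (by omega)).2 hβ
    refine ⟨(PTuple.pkMem_ofSides_iff (by omega) (by omega)).2
      ⟨fun _ _ _ => le_rfl, by omega, le_rfl, fun x hx => (hβ x hx).le, hm, by simpa using hn⟩, ?_⟩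
    simp only at hd hβ' ⊢
    rw [PTuple.dIdx_ofSides le_rfl (by omega), PTuple.dIdx_ofSides (by omega) le_rfl]
    exact ⟨rfl, hd, Partn.single_part_one (by omega), Partn.single_part_two (by omega), hβ'⟩

theorem setOf_stepSides_eq_image {k : ℕ} {m : ℤ} {n : ℕ} (hk : 3 ≤ k) :
    {t : PTuple k | PkMem k m (n + 1) t ∧ 3 ≤ dIdx k t.2.2.2 1 ∧
        (∀ j, 2 ≤ j → j ≤ k - 2 → dIdx k t.2.2.2 j = dIdx k t.2.2.2 1 - 1) ∧
        dIdx k t.2.2.2 (k - 1) = dIdx k t.2.2.2 1 - 2 ∧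
        (∀ j, 1 ≤ j → j ≤ k - 2 → (gIdx k t.2.2.1 j).parts = []) ∧
        t.1.part 1 = dIdx k t.2.2.2 1 - 2 ∧ t.1.part 2 = 0} =
      (fun p => PTuple.ofSides k (p.1 - 1) p.2 (stepSides k p.1)) '' Params k m n := by
  ext t
  constructor
  · rintro ⟨ht, hd, hmid, hlast, hγ, hα1, hα2⟩
    set d := dIdx k t.2.2.2 1 - 1
    have hsides : ∀ j, 1 ≤ j → j ≤ k - 1 → dIdx k t.2.2.2 j = stepSides k d j := by
      intro j h1 h2
      rcases (show j = 1 ∨ j = k - 1 ∨ 2 ≤ j ∧ j ≤ k - 2 by omega) with rfl | rfl | ⟨h1, h2⟩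
      · rw [stepSides_one]; omega
      · rw [stepSides_last d hk]; omega
      · rw [stepSides_mid h1 h2, hmid j h1 h2]
    have heq := PTuple.eq_ofSides ht.1
      (Partn.parts_eq_singleton (a := d - 1) (by omega) (by omega) hα2)
      (fun i => by simpa [gIdx_succ] using hγ (i + 1) (by omega) (by omega)) hsides
    rw [heq, PTuple.pkMem_ofSides_iff (by omega) (by omega), sum_stepSides_sq hk (by omega),
      stepSides_last d hk] at ht
    obtain ⟨-, -, -, hβ, hm, hn⟩ := ht
    refine ⟨(d, t.2.1), ?_, heq.symm⟩
    exact ⟨by omega, fun x hx => by have := hβ x hx; omega, hm, by dsimp only; omega⟩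
  · rintro ⟨⟨d, β⟩, ⟨hd, hβ, hm, hn⟩, rfl⟩
    simp only at hd hβ hm hn ⊢
    have hsides : ∀ j, 1 ≤ j → j ≤ k - 1 →
        dIdx k (PTuple.ofSides k (d - 1) β (stepSides k d)).2.2.2 j = stepSides k d j :=
      fun j h1 h2 => PTuple.dIdx_ofSides h1 h2
    refine ⟨(PTuple.pkMem_ofSides_iff (by omega) (by omega)).2
      ⟨fun j h1 h2 => stepSides_succ_le (by omega) h1 h2, ?_, ?_, fun x hx => ?_, hm, ?_⟩, ?_⟩
    · rw [stepSides_last d hk]; omega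
    · rw [stepSides_last d hk]
    · rw [stepSides_last d hk]; have := hβ x hx; omega
    · rw [sum_stepSides_sq hk (by omega)]; omega
    rw [hsides 1 le_rfl (by omega), hsides (k - 1) (by omega) le_rfl, stepSides_one,
      stepSides_last d hk]
    refine ⟨by omega, fun j h1 h2 => ?_, by omega, fun j _ _ => ?_,
      (Partn.single_part_one (by omega)).trans (by omega), Partn.single_part_two (by omega)⟩
    · rw [hsides j (by omega) (by omega), stepSides_mid h1 h2]; omega
    · exact congrArg Partn.parts (gIdx_const_empty k j)

theorem lem_pp6_general (k : ℕ) (m : ℤ) (n : ℕ) (hk : 3 ≤ k) :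
    {t : PTuple k | PkMem k m n t ∧
        dIdx k t.2.2.2 1 = dIdx k t.2.2.2 (k - 1) ∧ 2 ≤ dIdx k t.2.2.2 1 ∧
        t.1.part 1 = dIdx k t.2.2.2 1 ∧ t.1.part 2 = 0 ∧
        t.2.1.part 1 < dIdx k t.2.2.2 1}.ncard =
      {t : PTuple k | PkMem k m (n + 1) t ∧ 3 ≤ dIdx k t.2.2.2 1 ∧
        (∀ j, 2 ≤ j → j ≤ k - 2 → dIdx k t.2.2.2 j = dIdx k t.2.2.2 1 - 1) ∧
        dIdx k t.2.2.2 (k - 1) = dIdx k t.2.2.2 1 - 2 ∧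
        (∀ j, 1 ≤ j → j ≤ k - 2 → (gIdx k t.2.2.1 j).parts = []) ∧
        t.1.part 1 = dIdx k t.2.2.2 1 - 2 ∧ t.1.part 2 = 0}.ncard := by
  rw [setOf_equalSides_eq_image hk, setOf_stepSides_eq_image hk, Set.InjOn.ncard_image,
    Set.InjOn.ncard_image]
  · intro p _ q _ h
    obtain ⟨hβ, hd⟩ := PTuple.eq_of_ofSides_eq (by omega) h
    exact Prod.ext (by simpa only [stepSides_one, Nat.add_right_cancel_iff] using hd) hβ
  · intro p _ q _ h
    obtain ⟨hβ, hd⟩ := PTuple.eq_of_ofSides_eq (by omega) h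
    exact Prod.ext hd hβ

/-- Lemma 5.9 (restated). -/
theorem lem_pp6 (k : ℕ) (m : ℤ) (n : ℕ) (hk : 3 ≤ k) (hm : 0 ≤ m)
    (hn : k - 1 ≤ n) :
    {t : PTuple k | PkMem k m n t ∧
        dIdx k t.2.2.2 1 = dIdx k t.2.2.2 (k - 1) ∧ 2 ≤ dIdx k t.2.2.2 1 ∧
        t.1.part 1 = dIdx k t.2.2.2 1 ∧ t.1.part 2 = 0 ∧
        t.2.1.part 1 < dIdx k t.2.2.2 1}.ncard =
      {t : PTuple k | PkMem k m (n + 1) t ∧ 3 ≤ dIdx k t.2.2.2 1 ∧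
        (∀ j, 2 ≤ j → j ≤ k - 2 → dIdx k t.2.2.2 j = dIdx k t.2.2.2 1 - 1) ∧
        dIdx k t.2.2.2 (k - 1) = dIdx k t.2.2.2 1 - 2 ∧
        (∀ j, 1 ≤ j → j ≤ k - 2 → (gIdx k t.2.2.1 j).parts = []) ∧
        t.1.part 1 = dIdx k t.2.2.2 1 - 2 ∧ t.1.part 2 = 0}.ncard :=
  lem_pp6_general k m n hk
end

section
/- Let k ≥ 3, m ≥ 0 and n ≥ k−1 be integers. Then #{Δ ∈ P_k(m,n) : d_1 = d_{k−1} ≥ 2, α_1 = d_1 > α_2 ≥ 1, and α_1 − α_2 is odd} ≤ #{Δ ∈ P_k(m,n+1) : d_1 = d_{k−1} ≥ 2, 1 ≤ α_1 = α_2 < d_1, d_1 − α_1 is odd, and f_1(β) ≥ (d_1 − α_1 + 1)/2}. -/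
/-!
The injection replaces the largest part `α_1 = d_1` of `α` by a second copy of `α_2` and
appends `s = (d_1 - α_2 + 1) / 2` parts equal to `1` to both `α` and `β`. Since `d_1 - α_2` is
odd, the weight changes by `-(d_1 - α_2) + 2 s = 1`, while `ℓ(α) - ℓ(β)` is preserved and every
part stays at most `d_{k-1} = d_1`. The map is injective: `α_2` is the largest part of the new
`α`, which determines `s`, and the removed part is always `d_1`.
-/

namespace Partn

theorem parts_injective : Function.Injective Partn.parts := by
  rintro ⟨_, _, _⟩ ⟨_, _, _⟩ rfl
  rfl

def tail (p : Partn) : Partn :=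
  ⟨p.parts.tail, p.sorted.sublist (List.tail_sublist _),
    fun x hx => p.pos x (List.mem_of_mem_tail hx)⟩

def repeatHead (p : Partn) : Partn :=
  ⟨p.parts.take 1 ++ p.parts, by
    rcases p with ⟨_ | ⟨a, l⟩, hs, -⟩
    · simp
    · simpa [List.pairwise_cons] using hs, fun x hx => p.pos x (by
      rcases List.mem_append.mp hx with h | h
      · exact List.mem_of_mem_take h
      · exact h)⟩

def addOnes (p : Partn) (s : ℕ) : Partn :=
  ⟨p.parts ++ List.replicate s 1,
    List.pairwise_append.mpr ⟨p.sorted, List.pairwise_replicate.mpr (Or.inr le_rfl),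
      fun x hx y hy => (List.eq_of_mem_replicate hy).symm ▸ p.pos x hx⟩,
    fun x hx => by
      rcases List.mem_append.mp hx with h | h
      · exact p.pos x h
      · simp [List.eq_of_mem_replicate h]⟩

theorem mem_repeatHead {p : Partn} {x : ℕ} : x ∈ p.repeatHead.parts ↔ x ∈ p.parts := by
  simp only [repeatHead, List.mem_append, or_iff_right_iff_imp]
  exact List.mem_of_mem_take

theorem le_len_of_pos_part {p : Partn} {j : ℕ} (h : 0 < p.part j) : j ≤ p.len := by
  by_contra! hj
  rw [part, List.getD_eq_default _ _ (by unfold len at hj; omega)] at h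
  exact h.false

theorem part_one_cons_tail {p : Partn} (h : 0 < p.len) : p.part 1 :: p.tail.parts = p.parts := by
  match p, h with
  | ⟨_ :: _, _, _⟩, _ => rfl

theorem ext_part_one_tail {p q : Partn} (hp : 0 < p.len) (hq : 0 < q.len)
    (h1 : p.part 1 = q.part 1) (ht : p.tail = q.tail) : p = q :=
  parts_injective (by rw [← part_one_cons_tail hp, ← part_one_cons_tail hq, h1, ht])

theorem wt_eq_part_one_add_wt_tail (p : Partn) : p.wt = p.part 1 + p.tail.wt := by
  rcases p with ⟨_ | ⟨a, l⟩, -, -⟩ <;> rfl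

theorem len_tail (p : Partn) : p.tail.len = p.len - 1 :=
  List.length_tail

theorem part_one_tail (p : Partn) : p.tail.part 1 = p.part 2 := by
  rcases p with ⟨_ | ⟨a, l⟩, -, -⟩ <;> rfl

theorem len_repeatHead {p : Partn} (h : 0 < p.len) : p.repeatHead.len = p.len + 1 := by
  simp only [len, repeatHead, List.length_append, List.length_take] at h ⊢
  omega

theorem wt_repeatHead (p : Partn) : p.repeatHead.wt = p.part 1 + p.wt := by
  rcases p with ⟨_ | ⟨a, l⟩, -, -⟩ <;> simp [wt, repeatHead, part]

theorem part_one_repeatHead (p : Partn) : p.repeatHead.part 1 = p.part 1 := by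
  rcases p with ⟨_ | ⟨a, l⟩, -, -⟩ <;> rfl

theorem part_two_repeatHead (p : Partn) : p.repeatHead.part 2 = p.part 1 := by
  rcases p with ⟨_ | ⟨a, l⟩, -, -⟩ <;> rfl

theorem repeatHead_injective : Function.Injective repeatHead := by
  intro p q h
  have hlen := congrArg List.length (congrArg parts h)
  simp only [repeatHead, List.length_append, List.length_take] at hlen
  exact parts_injective (List.append_inj (congrArg parts h) (by simp; omega)).2

theorem len_addOnes (p : Partn) (s : ℕ) : (p.addOnes s).len = p.len + s := by
  simp [len, addOnes]

theorem wt_addOnes (p : Partn) (s : ℕ) : (p.addOnes s).wt = p.wt + s := by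
  simp [wt, addOnes]

theorem freq_one_addOnes (p : Partn) (s : ℕ) : (p.addOnes s).freq 1 = p.freq 1 + s := by
  simp [freq, addOnes, List.count_append]

theorem part_addOnes {p : Partn} {j : ℕ} (hj1 : 1 ≤ j) (hj : j ≤ p.len) (s : ℕ) :
    (p.addOnes s).part j = p.part j :=
  List.getD_append _ _ _ _ (by unfold len at hj; omega)

theorem part_addOnes_repeatHead_tail {p : Partn} (hp : 2 ≤ p.len) {j : ℕ} (hj1 : 1 ≤ j)
    (hj2 : j ≤ 2) (s : ℕ) : (p.tail.repeatHead.addOnes s).part j = p.part 2 := by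
  have htail : 0 < p.tail.len := by rw [len_tail]; omega
  rw [part_addOnes hj1 (by rw [len_repeatHead htail]; omega), ← part_one_tail]
  rcases (by omega : j = 1 ∨ j = 2) with rfl | rfl
  · exact part_one_repeatHead _
  · exact part_two_repeatHead _

theorem addOnes_left_injective (s : ℕ) : Function.Injective fun p : Partn => p.addOnes s :=
  fun _ _ h => parts_injective (List.append_cancel_right (congrArg parts h))

theorem forall_mem_addOnes_le {p : Partn} {b : ℕ} (hb : 1 ≤ b) (h : ∀ x ∈ p.parts, x ≤ b)
    (s : ℕ) : ∀ x ∈ (p.addOnes s).parts, x ≤ b := by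
  intro x hx
  rcases List.mem_append.mp hx with hx | hx
  · exact h x hx
  · rwa [List.eq_of_mem_replicate hx]

end Partn

def oddGapTuples (k : ℕ) (m : ℤ) (n : ℕ) : Set (PTuple k) :=
  {t | PkMem k m n t ∧
    dIdx k t.2.2.2 1 = dIdx k t.2.2.2 (k - 1) ∧ 2 ≤ dIdx k t.2.2.2 1 ∧
    t.1.part 1 = dIdx k t.2.2.2 1 ∧ t.1.part 2 < t.1.part 1 ∧
    1 ≤ t.1.part 2 ∧ Odd (t.1.part 1 - t.1.part 2)}

def pairedTopTuples (k : ℕ) (m : ℤ) (n : ℕ) : Set (PTuple k) :=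
  {t | PkMem k m n t ∧
    dIdx k t.2.2.2 1 = dIdx k t.2.2.2 (k - 1) ∧ 2 ≤ dIdx k t.2.2.2 1 ∧
    1 ≤ t.1.part 1 ∧ t.1.part 1 = t.1.part 2 ∧
    t.1.part 1 < dIdx k t.2.2.2 1 ∧ Odd (dIdx k t.2.2.2 1 - t.1.part 1) ∧
    (dIdx k t.2.2.2 1 - t.1.part 1 + 1) / 2 ≤ t.2.1.freq 1}

def lowerLargestPart (k : ℕ) (t : PTuple k) : PTuple k :=
  let s := (dIdx k t.2.2.2 1 - t.1.part 2 + 1) / 2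
  (t.1.tail.repeatHead.addOnes s, t.2.1.addOnes s, t.2.2.1, t.2.2.2)

section lowerLargestPart

variable {k : ℕ} {m : ℤ} {n : ℕ}

theorem mapsTo_lowerLargestPart :
    Set.MapsTo (lowerLargestPart k) (oddGapTuples k m n) (pairedTopTuples k m (n + 1)) := by
  rintro ⟨α, β, g, w⟩ h
  simp only [lowerLargestPart, oddGapTuples, pairedTopTuples, PkMem, Set.mem_ofPred_eq] at h ⊢
  obtain ⟨⟨hsq, hord, hd, hα, hβ, hlen, hγ, hwt⟩, hd1, hd2, hα1, hα12, hα2, ⟨r, hr⟩⟩ := h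
  have hαlen : 2 ≤ α.len := Partn.le_len_of_pos_part hα2
  have htail : 0 < α.tail.len := by rw [Partn.len_tail]; omega
  have hαwt := α.wt_eq_part_one_add_wt_tail
  refine ⟨⟨hsq, hord, hd, ?_, ?_, ?_, hγ, ?_⟩, hd1, hd2, ?_⟩
  · exact Partn.forall_mem_addOnes_le hd (fun x hx => hα x
      (List.mem_of_mem_tail (Partn.mem_repeatHead.mp hx))) _
  · exact Partn.forall_mem_addOnes_le hd hβ _
  · rw [Partn.len_addOnes, Partn.len_addOnes, Partn.len_repeatHead htail, Partn.len_tail]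
    push_cast [show 1 ≤ α.len by omega]
    omega
  · rw [Partn.wt_addOnes, Partn.wt_addOnes, Partn.wt_repeatHead, Partn.part_one_tail]
    omega
  · rw [Partn.part_addOnes_repeatHead_tail hαlen le_rfl (by omega),
      Partn.part_addOnes_repeatHead_tail hαlen (by omega) le_rfl, Partn.freq_one_addOnes]
    exact ⟨hα2, rfl, by omega, ⟨r, by omega⟩, by omega⟩

theorem injOn_lowerLargestPart : Set.InjOn (lowerLargestPart k) (oddGapTuples k m n) := by
  rintro ⟨α, β, g, w⟩ h ⟨α', β', g', w'⟩ h' heq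
  obtain ⟨-, -, -, hα1, -, hα2, -⟩ := h
  obtain ⟨-, -, -, hα1', -, hα2', -⟩ := h'
  simp only [lowerLargestPart, Prod.mk.injEq] at heq hα1 hα1' hα2 hα2' ⊢
  obtain ⟨hα, hβ, rfl, rfl⟩ := heq
  have hαlen := Partn.le_len_of_pos_part hα2
  have hαlen' := Partn.le_len_of_pos_part hα2'
  have h2 : α.part 2 = α'.part 2 := by
    simpa only [Partn.part_addOnes_repeatHead_tail hαlen le_rfl (by omega),
      Partn.part_addOnes_repeatHead_tail hαlen' le_rfl (by omega)] using
      congrArg (Partn.part · 1) hα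
  rw [h2] at hα hβ
  have htail := Partn.repeatHead_injective (Partn.addOnes_left_injective _ hα)
  exact ⟨Partn.ext_part_one_tail (by omega) (by omega) (hα1.trans hα1'.symm) htail,
    Partn.addOnes_left_injective _ hβ, rfl, rfl⟩

end lowerLargestPart

theorem lem_pp8_general (k : ℕ) (m : ℤ) (n : ℕ) :
    {t : PTuple k | PkMem k m n t ∧
        dIdx k t.2.2.2 1 = dIdx k t.2.2.2 (k - 1) ∧ 2 ≤ dIdx k t.2.2.2 1 ∧
        t.1.part 1 = dIdx k t.2.2.2 1 ∧ t.1.part 2 < t.1.part 1 ∧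
        1 ≤ t.1.part 2 ∧ Odd (t.1.part 1 - t.1.part 2)}.ncard ≤
      {t : PTuple k | PkMem k m (n + 1) t ∧
        dIdx k t.2.2.2 1 = dIdx k t.2.2.2 (k - 1) ∧ 2 ≤ dIdx k t.2.2.2 1 ∧
        1 ≤ t.1.part 1 ∧ t.1.part 1 = t.1.part 2 ∧
        t.1.part 1 < dIdx k t.2.2.2 1 ∧ Odd (dIdx k t.2.2.2 1 - t.1.part 1) ∧
        (dIdx k t.2.2.2 1 - t.1.part 1 + 1) / 2 ≤ t.2.1.freq 1}.ncard :=
  Set.ncard_le_ncard_of_injOn (lowerLargestPart k) mapsTo_lowerLargestPart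
    injOn_lowerLargestPart ((finite_setOf_pkMem k m (n + 1)).subset fun _ h => h.1)

/-- Lemma 5.11 (restated). -/
theorem lem_pp8 (k : ℕ) (m : ℤ) (n : ℕ) (hk : 3 ≤ k) (hm : 0 ≤ m)
    (hn : k - 1 ≤ n) :
    {t : PTuple k | PkMem k m n t ∧
        dIdx k t.2.2.2 1 = dIdx k t.2.2.2 (k - 1) ∧ 2 ≤ dIdx k t.2.2.2 1 ∧
        t.1.part 1 = dIdx k t.2.2.2 1 ∧ t.1.part 2 < t.1.part 1 ∧
        1 ≤ t.1.part 2 ∧ Odd (t.1.part 1 - t.1.part 2)}.ncard ≤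
      {t : PTuple k | PkMem k m (n + 1) t ∧
        dIdx k t.2.2.2 1 = dIdx k t.2.2.2 (k - 1) ∧ 2 ≤ dIdx k t.2.2.2 1 ∧
        1 ≤ t.1.part 1 ∧ t.1.part 1 = t.1.part 2 ∧
        t.1.part 1 < dIdx k t.2.2.2 1 ∧ Odd (dIdx k t.2.2.2 1 - t.1.part 1) ∧
        (dIdx k t.2.2.2 1 - t.1.part 1 + 1) / 2 ≤ t.2.1.freq 1}.ncard :=
  lem_pp8_general k m n
end
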